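/- Let X be a compact geodesic metric space, p ∈ X, and ρ > 0. If the level set {x ∈ X : dist(p,x) = ρ} of the distance function from p contains the image of a rectifiable noncontractible loop of X, then ρ ≥ sys(X,p)/2; in particular, ρ ≥ sys(X)/2. -/

import Mathlib

/-- The length of a path in a pseudo-emetric space: its total variation. -/
noncomputable def pathLength {X : Type*} [PseudoEMetricSpace X] {x y : X} (γ : Path x y) :
    ENNReal :=
  eVariationOn γ Set.univ

/-- A metric space is geodesic if any two points are joined by a path whose
length equals the distance between them. -/
def IsGeodesicSpace (X : Type*) [MetricSpace X] : Prop :=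
  ∀ x y : X, ∃ γ : Path x y, pathLength γ = edist x y

/-- The systole of a metric space: the infimum of lengths of noncontractible loops. -/
noncomputable def systole (X : Type*) [MetricSpace X] : ENNReal :=
  sInf {L | ∃ (x : X) (γ : Path x x), ¬γ.Homotopic (Path.refl x) ∧ pathLength γ = L}

/-- The pointed systole at `p`: the infimum of lengths of noncontractible loops based at `p`. -/
noncomputable def pointedSystole (X : Type*) [MetricSpace X] (p : X) : ENNReal :=
  sInf {L | ∃ γ : Path p p, ¬γ.Homotopic (Path.refl p) ∧ pathLength γ = L}

/-!
Join `p` to every point `y` by a shortest path `g y` (a spoke). For parameters `a, b` of the loop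
`γ`, the loop `Λ(a,b)` that goes out along the spoke to `γ a`, follows `γ` to `γ b` and returns
along the spoke has length at most `2ρ + length(γ|[a,b])`, and `Λ(a,b) · Λ(b,c) ≃ Λ(a,c)`.
As `Λ(0,1)` is conjugate to `γ`, the class of `Λ(0,t)` is not constant in `t`, so by connectedness
of `[0,1]` it is not locally constant: some `Λ(t,s)` with `s` arbitrarily close to `t` is
noncontractible. Since `γ` is continuous and rectifiable, `γ|[t,s]` is then arbitrarily short.
-/

open Set unitInterval Topology
open scoped ENNReal

section PathLength

variable {X : Type*} [PseudoEMetricSpace X] {x y z : X}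

theorem pathLength_symm (γ : Path x y) : pathLength γ.symm = pathLength γ := by
  have := eVariationOn.comp_eq_of_antitoneOn γ σ (t := univ) fun _ _ _ _ h => symm_le_symm.2 h
  rwa [image_univ_of_surjective symm_bijective.surjective] at this

theorem pathLength_subpath (γ : Path x y) (a b : I) :
    pathLength (γ.subpath a b) = eVariationOn γ (uIcc a b) := by
  rw [← Path.range_subpathAux, ← image_univ, pathLength]
  rcases le_total a b with hab | hba
  · exact eVariationOn.comp_eq_of_monotoneOn γ _ fun s _ t _ hst => by
      simp only [← Subtype.coe_le_coe, Icc.coe_convexComb] at hst ⊢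
      nlinarith [(Subtype.coe_le_coe.2 hab : (a : ℝ) ≤ b)]
  · exact eVariationOn.comp_eq_of_antitoneOn γ _ fun s _ t _ hst => by
      simp only [← Subtype.coe_le_coe, Icc.coe_convexComb] at hst ⊢
      nlinarith [(Subtype.coe_le_coe.2 hba : (b : ℝ) ≤ a)]

theorem pathLength_trans_le (p : Path x y) (q : Path y z) :
    pathLength (p.trans q) ≤ pathLength p + pathLength q := by
  let half : I := ⟨1 / 2, by norm_num, by norm_num⟩
  have hsplit := eVariationOn.Icc_add_Icc (p.trans q) (s := univ) (a := 0) (b := half) (c := 1)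
    (Subtype.coe_le_coe.1 (by norm_num)) (Subtype.coe_le_coe.1 (by norm_num)) (mem_univ _)
  rw [univ_inter, univ_inter, univ_inter, ← univ_eq_Icc] at hsplit
  rw [pathLength, ← hsplit]
  gcongr
  · have heq : EqOn (p.trans q) (p ∘ fun t : I => projIcc 0 1 zero_le_one (2 * t)) (Icc 0 half) :=
      fun t ht => by
        rw [Path.trans_apply, dif_pos (show (t : ℝ) ≤ 1 / 2 from ht.2)]
        exact congrArg p (projIcc_of_mem _ _).symm
    rw [eVariationOn.eq_of_eqOn heq]
    exact eVariationOn.comp_le_of_monotoneOn _ _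
      (fun s _ t _ hst => monotone_projIcc _ (by gcongr)) fun _ _ => mem_univ _
  · have heq : EqOn (p.trans q) (q ∘ fun t : I => projIcc 0 1 zero_le_one (2 * t - 1))
        (Icc half 1) := fun t ht => by
      have ht' : 1 / 2 ≤ (t : ℝ) := ht.1
      rcases ht'.eq_or_lt with h | h
      · rw [Path.trans_apply, dif_pos h.ge]
        simp [← h]
      · rw [Path.trans_apply, dif_neg h.not_ge]
        exact congrArg q (projIcc_of_mem _ _).symm
    rw [eVariationOn.eq_of_eqOn heq]
    exact eVariationOn.comp_le_of_monotoneOn _ _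
      (fun s _ t _ hst => monotone_projIcc _ (by gcongr)) fun _ _ => mem_univ _

end PathLength

section SpokeLoop

variable {X : Type*} [TopologicalSpace X] {p x y : X}

open Path.Homotopic.Quotient

theorem homotopic_refl_of_conj_homotopic_refl {u : Path p y} {δ : Path y y}
    (h : (u.trans (δ.trans u.symm)).Homotopic (Path.refl p)) : δ.Homotopic (Path.refl y) := by
  rw [← Path.Homotopic.Quotient.eq] at h ⊢
  have := congrArg (fun q => (mk u).symm.trans (q.trans (mk u))) h
  simp only [mk_trans, mk_symm, mk_refl, refl_trans, trans_assoc, symm_trans, trans_refl] at this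
  rwa [← trans_assoc, symm_trans, refl_trans] at this

noncomputable def spokeLoop (g : ∀ y, Path p y) (γ : Path x y) (a b : I) : Path p p :=
  (g (γ a)).trans ((γ.subpath a b).trans (g (γ b)).symm)

theorem spokeLoop_trans_homotopic (g : ∀ y, Path p y) (γ : Path x y) (a b c : I) :
    ((spokeLoop g γ a b).trans (spokeLoop g γ b c)).Homotopic (spokeLoop g γ a c) := by
  rw [← Path.Homotopic.Quotient.eq]
  have := Path.Homotopic.Quotient.eq.2 ⟨Path.Homotopy.subpathTransSubpath γ a b c⟩
  simp only [spokeLoop, mk_trans, mk_symm, trans_assoc] at this ⊢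
  rw [← trans_assoc _ (mk (g (γ b))), symm_trans, refl_trans, ← trans_assoc (mk (γ.subpath a b)),
    this]

theorem spokeLoop_self_homotopic (g : ∀ y, Path p y) (γ : Path x y) (a : I) :
    (spokeLoop g γ a a).Homotopic (Path.refl p) := by
  rw [← Path.Homotopic.Quotient.eq]
  simp [spokeLoop]

theorem homotopic_of_spokeLoop_zero_one (g : ∀ y, Path p y) {γ : Path x x}
    (h : (spokeLoop g γ 0 1).Homotopic (Path.refl p)) : γ.Homotopic (Path.refl x) := by
  -- `γ 0` and `γ 1` are only propositionally equal to `x`, so they are generalized first.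
  have hcast : ∀ {y z : X} (δ : Path y z) (hy : y = x) (hz : z = x),
      ((g y).trans (δ.trans (g z).symm)).Homotopic (Path.refl p) →
        (δ.cast hy.symm hz.symm).Homotopic (Path.refl x) := by
    intro y z δ hy hz
    subst y z
    exact homotopic_refl_of_conj_homotopic_refl
  convert hcast (γ.subpath 0 1) γ.source γ.target h
  ext
  simp

theorem exists_not_homotopic_spokeLoop (g : ∀ y, Path p y) {γ : Path x x}
    (hγ : ¬γ.Homotopic (Path.refl x)) {N : I → I → Prop} (hN : ∀ t, ∀ᶠ s in 𝓝 t, N t s) :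
    ∃ a b, N a b ∧ ¬(spokeLoop g γ a b).Homotopic (Path.refl p) := by
  by_contra! hshort
  have hconst : IsLocallyConstant fun t => mk (spokeLoop g γ 0 t) := by
    refine (IsLocallyConstant.iff_eventually_eq _).2 fun t => (hN t).mono fun s hs => ?_
    calc mk (spokeLoop g γ 0 s) = mk ((spokeLoop g γ 0 t).trans (spokeLoop g γ t s)) :=
          (Path.Homotopic.Quotient.eq.2 (spokeLoop_trans_homotopic g γ 0 t s)).symm
      _ = mk (spokeLoop g γ 0 t) := by
          rw [mk_trans, Path.Homotopic.Quotient.eq.2 (hshort t s hs), mk_refl, trans_refl]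
  refine hγ (homotopic_of_spokeLoop_zero_one g ?_)
  rw [← Path.Homotopic.Quotient.eq, hconst.apply_eq_of_preconnectedSpace 1 0]
  exact Path.Homotopic.Quotient.eq.2 (spokeLoop_self_homotopic g γ 0)

end SpokeLoop

theorem BoundedVariationOn.eventually_eVariationOn_uIcc_lt {α E : Type*} [LinearOrder α]
    [TopologicalSpace α] [OrderTopology α] [PseudoEMetricSpace E] {f : α → E}
    (hf : BoundedVariationOn f univ) {t : α} (hft : ContinuousAt f t) {ε : ℝ≥0∞} (hε : 0 < ε) :
    ∀ᶠ s in 𝓝 t, eVariationOn f (uIcc t s) < ε := by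
  have hleft := hf.tendsto_eVariationOn_Icc_zero_left hft.continuousWithinAt
  have hright := hf.tendsto_eVariationOn_Icc_zero_right t hft.continuousWithinAt
  simp only [nhdsWithin_univ, univ_inter] at hleft hright
  filter_upwards [hleft.eventually (gt_mem_nhds hε), hright.eventually (gt_mem_nhds hε)]
    with s hs_left hs_right
  rcases le_total t s with hts | hst
  · rwa [uIcc_of_le hts]
  · rwa [uIcc_of_ge hst]

theorem pathLength_spokeLoop_le {X : Type*} [PseudoEMetricSpace X] {p x y : X}
    (g : ∀ y, Path p y) (γ : Path x y) (a b : I) :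
    pathLength (spokeLoop g γ a b) ≤
      pathLength (g (γ a)) + eVariationOn γ (uIcc a b) + pathLength (g (γ b)) := by
  rw [← pathLength_subpath, ← pathLength_symm (g (γ b)), add_assoc]
  exact (pathLength_trans_le _ _).trans (by gcongr; exact pathLength_trans_le _ _)

theorem systole_le_pointedSystole {X : Type*} [MetricSpace X] (p : X) :
    systole X ≤ pointedSystole X p :=
  sInf_le_sInf fun _ ⟨γ, hγ, hlen⟩ => ⟨p, γ, hγ, hlen⟩

theorem pointedSystole_le_two_mul {X : Type*} [MetricSpace X] {p x : X} (g : ∀ y, Path p y)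
    {γ : Path x x} (hγ : ¬γ.Homotopic (Path.refl x)) (hrect : pathLength γ ≠ ⊤) {r : ℝ≥0∞}
    (hg : ∀ t, pathLength (g (γ t)) ≤ r) :
    pointedSystole X p ≤ 2 * r := by
  refine ENNReal.le_of_forall_pos_le_add fun ε hε _ => ?_
  obtain ⟨a, b, hab, hnc⟩ := exists_not_homotopic_spokeLoop g hγ
    fun t => BoundedVariationOn.eventually_eVariationOn_uIcc_lt (f := γ) hrect
      γ.continuous.continuousAt (ENNReal.coe_pos.2 hε)
  calc pointedSystole X p ≤ pathLength (spokeLoop g γ a b) := sInf_le ⟨_, hnc, rfl⟩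
    _ ≤ r + ε + r := by
        grw [pathLength_spokeLoop_le, hg a, hg b, hab]
    _ = 2 * r + ε := by ring

theorem noncontractible_level_far_from_center_general {X : Type*} [MetricSpace X]
    (hgeo : IsGeodesicSpace X) (p : X) (ρ : ℝ)
    (x : X) (γ : Path x x) (hnc : ¬γ.Homotopic (Path.refl x))
    (hrect : pathLength γ ≠ ⊤) (hsub : Set.range ⇑γ ⊆ {y | dist p y = ρ}) :
    pointedSystole X p / 2 ≤ ENNReal.ofReal ρ ∧ systole X / 2 ≤ ENNReal.ofReal ρ := by
  choose g hg using hgeo p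
  have hspoke (t : I) : pathLength (g (γ t)) ≤ ENNReal.ofReal ρ := by
    rw [hg, edist_dist, hsub ⟨t, rfl⟩]
  have hpointed : pointedSystole X p / 2 ≤ ENNReal.ofReal ρ :=
    ENNReal.div_le_of_le_mul' (pointedSystole_le_two_mul g hnc hrect hspoke)
  exact ⟨hpointed, (ENNReal.div_le_div_right (systole_le_pointedSystole p) 2).trans hpointed⟩

/-- If the level set `{x | dist p x = ρ}` of the distance function from `p`
contains the image of a rectifiable noncontractible loop, then `ρ ≥ sys(X,p)/2`;
in particular `ρ ≥ sys(X)/2`. -/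
theorem noncontractible_level_far_from_center {X : Type*} [MetricSpace X] [CompactSpace X]
    (hgeo : IsGeodesicSpace X) (p : X) (ρ : ℝ) (hρ : 0 < ρ)
    (x : X) (γ : Path x x) (hnc : ¬γ.Homotopic (Path.refl x))
    (hrect : pathLength γ ≠ ⊤) (hsub : Set.range ⇑γ ⊆ {y | dist p y = ρ}) :
    pointedSystole X p / 2 ≤ ENNReal.ofReal ρ ∧ systole X / 2 ≤ ENNReal.ofReal ρ :=
  noncontractible_level_far_from_center_general hgeo p ρ x γ hnc hrect hsub
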